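/- Let Q = n/d be a real rational function with deg n < deg d (strictly proper) whose poles all lie in the open unit disc (every complex root of d satisfies |z| < 1), and suppose 1 + Q(e^{iθ}) ≠ 0 for all θ ∈ [−π,π]. Then (1/(2π)) ∫_{−π}^{π} log|1 + Q(e^{iθ})| dθ = Σ log|z|, where the sum runs (with multiplicity) over the complex roots z of the polynomial d + n with |z| > 1. (These roots are exactly the unstable poles of the feedback controller K = Q(1+Q)^{−1}, so the achievable transmission rate of the coding scheme built from Q equals Σ_i log|λ_i(A_u)|.) -/

import Mathlib

/-!
On the unit circle `1 + n/d = (d + n)/d`, so the average of `log ‖1 + n/d‖` is the difference of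
the logarithmic Mahler measures of `d + n` and `d`. By Jensen's formula the logarithmic Mahler
measure of a polynomial is `log ‖leading coefficient‖ + Σ log⁺ ‖root‖`. Since `deg n < deg d`,
the polynomials `d + n` and `d` share their leading coefficient, and the roots of `d` lie in the
unit disc, so only the roots of `d + n` outside the closed disc survive.
-/

open Real Polynomial

theorem Multiset.sum_map_posLog_norm_eq_sum_filter (s : Multiset ℂ) :
    (s.map fun z => log⁺ ‖z‖).sum = ((s.filter fun z => 1 < ‖z‖).map fun z => log ‖z‖).sum := by
  have hin : ((s.filter fun z => ¬1 < ‖z‖).map fun z => log⁺ ‖z‖).sum = 0 := by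
    refine Multiset.sum_eq_zero fun x hx => ?_
    obtain ⟨z, hz, rfl⟩ := Multiset.mem_map.1 hx
    rw [posLog_eq_zero_iff, abs_norm]
    exact not_lt.1 (Multiset.mem_filter.1 hz).2
  conv_lhs => rw [← Multiset.filter_add_not (fun z : ℂ => 1 < ‖z‖) s]
  rw [Multiset.map_add, Multiset.sum_add, hin, add_zero]
  refine congrArg Multiset.sum (Multiset.map_congr rfl fun z hz => ?_)
  exact posLog_eq_log (by rw [abs_norm]; exact (Multiset.of_mem_filter hz).le)

theorem integral_neg_pi_pi_eq_circleAverage (f : ℂ → ℝ) :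
    (1 / (2 * π)) * (∫ θ in (-π)..π, f (Complex.exp ((θ : ℂ) * Complex.I))) =
      circleAverage f 0 1 := by
  have hper : Function.Periodic (fun θ : ℝ => f (circleMap 0 1 θ)) (2 * π) :=
    fun θ => by simp [periodic_circleMap 0 1 θ]
  have hshift := hper.intervalIntegral_add_eq (-π) 0
  rw [show -π + 2 * π = π by ring, zero_add] at hshift
  simp only [circleMap_zero, Complex.ofReal_one, one_mul] at hshift
  rw [hshift, circleAverage_def, one_div, smul_eq_mul]
  simp only [circleMap_zero, Complex.ofReal_one, one_mul]

namespace Polynomial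

theorem circleAverage_log_norm_eval_div {p q : ℂ[X]} (hp : p ≠ 0) (hq : q ≠ 0) :
    circleAverage (fun z => log ‖p.eval z / q.eval z‖) 0 1 =
      p.logMahlerMeasure - q.logMahlerMeasure := by
  have hpq : p * q ≠ 0 := mul_ne_zero hp hq
  have hae : (fun z => log ‖p.eval z / q.eval z‖) =ᶠ[Filter.codiscreteWithin (Metric.sphere 0 |1|)]
      fun z => log ‖p.eval z‖ - log ‖q.eval z‖ := by
    filter_upwards [compl_finite_mem_codiscreteWithin (p * q).roots.finite_toSet] with z hz
    have : p.eval z * q.eval z ≠ 0 := by simpa [hpq] using hz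
    rw [norm_div, log_div (by simpa using left_ne_zero_of_mul this)
      (by simpa using right_ne_zero_of_mul this)]
  rw [circleAverage_congr_codiscreteWithin hae one_ne_zero,
    circleAverage_fun_sub ((circleIntegrable_def _ _ _).2 p.intervalIntegrable_mahlerMeasure)
      ((circleIntegrable_def _ _ _).2 q.intervalIntegrable_mahlerMeasure)]
  rfl

theorem logMahlerMeasure_eq_log_norm_leadingCoeff {p : ℂ[X]} (hp : ∀ z ∈ p.roots, ‖z‖ ≤ 1) :
    p.logMahlerMeasure = log ‖p.leadingCoeff‖ := by
  rw [logMahlerMeasure_eq_log_leadingCoeff_add_sum_log_roots, Multiset.sum_eq_zero, add_zero]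
  simp only [Multiset.mem_map]
  rintro _ ⟨z, hz, rfl⟩
  rw [posLog_eq_zero_iff, abs_norm]
  exact hp z hz

end Polynomial

theorem log_integral_eq_sum_unstable_roots
    (n d : Polynomial ℝ)
    (hdeg : n.degree < d.degree)
    (hdroots : ∀ z : ℂ, (d.map (algebraMap ℝ ℂ)).eval z = 0 → ‖z‖ < 1) :
    (1 / (2 * π)) * (∫ θ in (-π)..π, Real.log ‖
        (1 + (n.map (algebraMap ℝ ℂ)).eval (Complex.exp ((θ : ℂ) * Complex.I)) /
             (d.map (algebraMap ℝ ℂ)).eval (Complex.exp ((θ : ℂ) * Complex.I)))‖)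
      = (((((d + n).map (algebraMap ℝ ℂ)).roots.filter
            (fun z => 1 < ‖z‖)).map
          (fun z => Real.log ‖z‖)).sum) := by
  have hlc : (d + n).leadingCoeff = d.leadingCoeff := by
    rw [add_comm]; exact leadingCoeff_add_of_degree_lt hdeg
  have hd : d ≠ 0 := ne_zero_of_degree_gt hdeg
  have hdn : d + n ≠ 0 := by rwa [← leadingCoeff_ne_zero, hlc, leadingCoeff_ne_zero]
  have hcircle : Set.EqOn
      (fun z => log ‖1 + (n.map (algebraMap ℝ ℂ)).eval z / (d.map (algebraMap ℝ ℂ)).eval z‖)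
      (fun z => log ‖((d + n).map (algebraMap ℝ ℂ)).eval z / (d.map (algebraMap ℝ ℂ)).eval z‖)
      (Metric.sphere 0 |1|) := by
    intro z hz
    have hdz : (d.map (algebraMap ℝ ℂ)).eval z ≠ 0 := fun h0 => by
      simp only [abs_one, mem_sphere_iff_norm, sub_zero] at hz
      exact (hdroots z h0).ne hz
    simp only [Polynomial.map_add, eval_add, add_div, div_self hdz]
  rw [integral_neg_pi_pi_eq_circleAverage
      (fun z => log ‖1 + (n.map (algebraMap ℝ ℂ)).eval z / (d.map (algebraMap ℝ ℂ)).eval z‖),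
    circleAverage_congr_sphere hcircle,
    circleAverage_log_norm_eval_div (map_ne_zero hdn) (map_ne_zero hd),
    logMahlerMeasure_eq_log_norm_leadingCoeff (p := d.map _)
      (fun z hz => (hdroots z (isRoot_of_mem_roots hz)).le),
    logMahlerMeasure_eq_log_leadingCoeff_add_sum_log_roots, leadingCoeff_map, leadingCoeff_map,
    hlc, Multiset.sum_map_posLog_norm_eq_sum_filter, add_sub_cancel_left]
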